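/- Let s, D, n be positive integers with s odd, s ≥ 3D, and Dn even, and let a_{i,k} (1 ≤ i ≤ s, 0 ≤ k ≤ n) be rational numbers such that R_n(t) = Σ_{i=1}^{s} Σ_{k=0}^{n} a_{i,k}/(t+k)^i for every real t ∉ {0, -1, …, -n}. Then for every i with 3 ≤ i ≤ s, the rational number d_n^{s+1-i} · Σ_{k=0}^{n} a_{i,k} is an integer, where d_n = lcm(1, 2, …, n). -/

import Mathlib

/-!
Fix a pole `t = -k` and put `x = t + k`. Up to order `x^(s+1)`, the expansion of
`(t + k)^(s+1) R_n(t)` is `∑_i a_{i,k} x^(s+1-i)`, the other poles contributing multiples of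
`x^(s+1)`. Writing `D (t - n + j/D) = Dt - Dn + j`, the numerator splits into `t + 2n`, `3D`
blocks of `n` consecutive linear factors `Dt + c + r`, and `n!^(s+1-3D)`; so
`(t + k)^(s+1) R_n(t)` is `t + 2n` times `s + 1` factors `(t + k) P(t) / ∏_{j=0}^{n} (t + j)` with
`deg P ≤ n` and `n! ∣ P(-j)`. By Lagrange interpolation at the `-j`, each factor is an integer
combination of `1` and the `x / (x + j - k)`, and `|j - k| ∣ d_n` puts the `m`-th coefficient of
their expansions in `d_n^(-m) ℤ`. Power series with this property form a ring, hence
`d_n^(s+1-i) a_{i,k} ∈ ℤ`.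
-/

/-- The rational function `R_n(t)` of Fischler–Sprang–Zudilin (depending on `s` and `D`). -/
noncomputable def R (s D n : ℕ) (t : ℝ) : ℝ :=
  (D : ℝ) ^ (3 * D * n) * (n.factorial : ℝ) ^ (s + 1 - 3 * D) *
    (∏ j ∈ Finset.range (3 * D * n + 1), (t - n + (j : ℝ) / D)) /
    (∏ j ∈ Finset.range (n + 1), (t + j)) ^ (s + 1)

/-- `d_m = lcm(1, 2, …, m)`. -/
def dd (m : ℕ) : ℕ := (Finset.Icc 1 m).lcm id

open Polynomial Finset
open scoped PowerSeries Nat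

noncomputable section

def rescaleIntegral (d : ℤ) : Subring ℚ⟦X⟧ :=
  (PowerSeries.map (Int.castRingHom ℚ)).range.comap (PowerSeries.rescale (d : ℚ))

theorem mem_rescaleIntegral_iff {d : ℤ} {f : ℚ⟦X⟧} :
    f ∈ rescaleIntegral d ↔ ∀ m, ∃ z : ℤ, (d : ℚ) ^ m * PowerSeries.coeff m f = z := by
  constructor
  · rintro ⟨g, hg⟩ m
    exact ⟨PowerSeries.coeff m g, by simpa using (congrArg (PowerSeries.coeff m) hg).symm⟩
  · intro h
    choose z hz using h
    exact ⟨PowerSeries.mk z, by ext m; simp [hz]⟩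

theorem X_add_intCast_mem_rescaleIntegral (d c : ℤ) :
    PowerSeries.X + PowerSeries.C (c : ℚ) ∈ rescaleIntegral d := by
  refine add_mem ⟨PowerSeries.C d * PowerSeries.X, by simp [PowerSeries.rescale_X]⟩ ?_
  rw [map_intCast]
  exact intCast_mem _ c

theorem mk_neg_inv_pow_mul_X_add_C {e : ℚ} (he : e ≠ 0) :
    (PowerSeries.mk fun m => (-e⁻¹) ^ m) * (PowerSeries.X + PowerSeries.C e) =
      PowerSeries.C e := by
  ext (_ | m)
  · simp
  · simp only [mul_add, map_add, PowerSeries.coeff_succ_mul_X, PowerSeries.coeff_mk,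
      PowerSeries.coeff_mul_C, pow_succ, PowerSeries.coeff_succ_C]
    field_simp
    ring

theorem X_mul_inv_X_add_C_mem_rescaleIntegral {d e : ℤ} (he : e ≠ 0) (hed : e ∣ d) :
    PowerSeries.X * (PowerSeries.X + PowerSeries.C (e : ℚ))⁻¹ ∈ rescaleIntegral d := by
  obtain ⟨q, rfl⟩ := hed
  have he' : (e : ℚ) ≠ 0 := by exact_mod_cast he
  have hunit : PowerSeries.constantCoeff (PowerSeries.X + PowerSeries.C (e : ℚ)) ≠ 0 := by
    simpa using he'
  have hgeom : PowerSeries.C (e : ℚ) * (PowerSeries.X + PowerSeries.C (e : ℚ))⁻¹ =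
      PowerSeries.mk fun m => (-(e : ℚ)⁻¹) ^ m :=
    ((PowerSeries.eq_mul_inv_iff_mul_eq hunit).mpr (mk_neg_inv_pow_mul_X_add_C he')).symm
  have hsplit : PowerSeries.X * (PowerSeries.X + PowerSeries.C (e : ℚ))⁻¹ =
      1 - PowerSeries.C (e : ℚ) * (PowerSeries.X + PowerSeries.C (e : ℚ))⁻¹ := by
    rw [eq_sub_iff_add_eq, ← add_mul, PowerSeries.mul_inv_cancel _ hunit]
  rw [hsplit, hgeom]
  refine sub_mem (one_mem _) (mem_rescaleIntegral_iff.mpr fun m => ⟨(-q) ^ m, ?_⟩)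
  rw [PowerSeries.coeff_mk, ← mul_pow]
  push_cast
  field_simp

theorem sub_dvd_dd {n j k : ℕ} (hj : j ≤ n) (hk : k ≤ n) (hjk : j ≠ k) :
    (j - k : ℤ) ∣ dd n := by
  rw [← Int.natAbs_dvd_natAbs, Int.natAbs_natCast]
  exact Finset.dvd_lcm (s := Icc 1 n) (f := id) (b := (j - k : ℤ).natAbs)
    (mem_Icc.mpr (by omega))

/-- Expansion around `t = -k`, in the variable `t + k`. -/
def expandAt (k : ℕ) : ℚ[X] →ₐ[ℚ] ℚ⟦X⟧ :=
  aeval (PowerSeries.X - PowerSeries.C (k : ℚ))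

theorem expandAt_C (k : ℕ) (c : ℚ) : expandAt k (C c) = PowerSeries.C c :=
  aeval_C _ c

theorem expandAt_X_add_C (k : ℕ) (c : ℚ) :
    expandAt k (X + C c) = PowerSeries.X + PowerSeries.C (c - k) := by
  simp only [expandAt, map_add, map_sub, aeval_X, aeval_C, PowerSeries.algebraMap_eq]
  ring

theorem expandAt_X_add_C_self (k : ℕ) : expandAt k (X + C (k : ℚ)) = PowerSeries.X := by
  rw [expandAt_X_add_C, sub_self, map_zero, add_zero]

def cofactor (n k : ℕ) : ℚ[X] :=
  ∏ j ∈ (range (n + 1)).erase k, (X + C (j : ℚ))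

theorem constantCoeff_expandAt_X_add_C_ne_zero {j k : ℕ} (h : j ≠ k) :
    PowerSeries.constantCoeff (expandAt k (X + C (j : ℚ))) ≠ 0 := by
  rw [expandAt_X_add_C]
  simpa [sub_eq_zero] using h

theorem constantCoeff_expandAt_cofactor_ne_zero (n k : ℕ) :
    PowerSeries.constantCoeff (expandAt k (cofactor n k)) ≠ 0 := by
  rw [cofactor, map_prod, map_prod, prod_ne_zero_iff]
  exact fun j hj => constantCoeff_expandAt_X_add_C_ne_zero (ne_of_mem_erase hj)

theorem X_dvd_expandAt_cofactor {n k k' : ℕ} (hk : k ≤ n) (hkk' : k ≠ k') :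
    PowerSeries.X ∣ expandAt k (cofactor n k') := by
  rw [← expandAt_X_add_C_self k]
  exact map_dvd (expandAt k) (dvd_prod_of_mem _ (mem_erase.mpr ⟨hkk', mem_range.mpr (by omega)⟩))

theorem expandAt_cofactor_mul_inv_mem {n j k : ℕ} (hj : j ≤ n) (hk : k ≤ n) :
    expandAt k (cofactor n j) * (expandAt k (cofactor n k))⁻¹ ∈ rescaleIntegral (dd n) := by
  have hw := constantCoeff_expandAt_cofactor_ne_zero n k
  obtain rfl | hjk := eq_or_ne j k
  · rw [PowerSeries.mul_inv_cancel _ hw]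
    exact one_mem _
  have hf := constantCoeff_expandAt_X_add_C_ne_zero hjk
  have hcross : expandAt k (cofactor n j) * expandAt k (X + C (j : ℚ)) =
      PowerSeries.X * expandAt k (cofactor n k) := by
    have hall : cofactor n j * (X + C (j : ℚ)) = (X + C (k : ℚ)) * cofactor n k := by
      rw [cofactor, cofactor,
        prod_erase_mul _ (fun l : ℕ => X + C (l : ℚ)) (mem_range.mpr (by omega)),
        mul_prod_erase _ (fun l : ℕ => X + C (l : ℚ)) (mem_range.mpr (by omega))]
    rw [← map_mul, hall, map_mul, expandAt_X_add_C_self]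
  have hratio : expandAt k (cofactor n j) * (expandAt k (cofactor n k))⁻¹ =
      PowerSeries.X * (expandAt k (X + C (j : ℚ)))⁻¹ := by
    rw [PowerSeries.eq_mul_inv_iff_mul_eq hf, mul_right_comm, hcross, mul_assoc,
      PowerSeries.mul_inv_cancel _ hw, mul_one]
  rw [hratio, expandAt_X_add_C, show (j : ℚ) - k = ((j - k : ℤ) : ℚ) by push_cast; rfl]
  exact X_mul_inv_X_add_C_mem_rescaleIntegral (by omega) (sub_dvd_dd hj hk hjk)

theorem prod_erase_range_sub (n j : ℕ) (hj : j ≤ n) :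
    ∏ l ∈ (range (n + 1)).erase j, ((l : ℚ) - j) = (-1) ^ j * j ! * (n - j)! := by
  have hsplit : (range (n + 1)).erase j = range j ∪ Ico (j + 1) (n + 1) := by
    ext l
    simp only [mem_erase, mem_range, mem_union, mem_Ico]
    omega
  have hbelow : ∏ l ∈ range j, ((l : ℚ) - j) = (-1) ^ j * j ! := by
    rw [← Nat.descFactorial_self, ← descPochhammer_eval_eq_descFactorial,
      descPochhammer_eval_eq_prod_range, pow_eq_prod_const (-1 : ℚ) j, ← prod_mul_distrib]
    exact prod_congr rfl fun l _ => by ring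
  have habove : ∏ l ∈ Ico (j + 1) (n + 1), ((l : ℚ) - j) = (n - j)! := by
    rw [prod_Ico_eq_prod_range, show n + 1 - (j + 1) = n - j by omega,
      ← prod_range_add_one_eq_factorial]
    push_cast
    exact prod_congr rfl fun r _ => by ring
  rw [hsplit, prod_union (disjoint_left.mpr fun l hl hl' => by
    simp only [mem_range, mem_Ico] at hl hl'; omega), hbelow, habove]

theorem lagrange_basis_neg_natCast (n j : ℕ) :
    Lagrange.basis (range (n + 1)) (fun l : ℕ => -(l : ℚ)) j =
      C (∏ l ∈ (range (n + 1)).erase j, ((l : ℚ) - j))⁻¹ * cofactor n j := by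
  rw [Lagrange.basis, cofactor, ← prod_inv_distrib, map_prod, ← prod_mul_distrib]
  refine prod_congr rfl fun l _ => ?_
  rw [Lagrange.basisDivisor, neg_sub_neg, map_neg, sub_neg_eq_add]

theorem eq_sum_C_mul_cofactor {n : ℕ} {P : ℚ[X]} (hP : P.degree ≤ n) :
    P = ∑ j ∈ range (n + 1),
      C (P.eval (-(j : ℚ)) / ∏ l ∈ (range (n + 1)).erase j, ((l : ℚ) - j)) * cofactor n j := by
  have hinj : Set.InjOn (fun j : ℕ => -(j : ℚ)) (range (n + 1) : Set ℕ) :=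
    fun a _ b _ h => by simpa using h
  have hdeg : P.degree < (range (n + 1)).card := by
    rw [card_range]
    exact hP.trans_lt (by exact_mod_cast Nat.lt_succ_self n)
  conv_lhs => rw [Lagrange.eq_interpolate hinj hdeg, Lagrange.interpolate_apply]
  refine sum_congr rfl fun j _ => ?_
  rw [lagrange_basis_neg_natCast, div_eq_mul_inv, C_mul, mul_assoc]

/-- The Lagrange coefficients at the nodes `-j` are `(-1)^j (n choose j) P(-j) / n!`. -/
theorem expandAt_mul_inv_mem {n k : ℕ} (hk : k ≤ n) {P : ℚ[X]} (hdeg : P.degree ≤ n)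
    (hP : ∀ j ≤ n, ∃ z : ℤ, P.eval (-(j : ℚ)) = n ! * z) :
    expandAt k P * (expandAt k (cofactor n k))⁻¹ ∈ rescaleIntegral (dd n) := by
  rw [eq_sum_C_mul_cofactor hdeg, map_sum, sum_mul]
  refine sum_mem fun j hj => ?_
  have hjn : j ≤ n := Nat.lt_succ_iff.mp (mem_range.mp hj)
  obtain ⟨z, hz⟩ := hP j hjn
  have hcoeff : P.eval (-(j : ℚ)) / ∏ l ∈ (range (n + 1)).erase j, ((l : ℚ) - j) =
      (((-1) ^ j * n.choose j * z : ℤ) : ℚ) := by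
    rw [prod_erase_range_sub n j hjn, hz, ← Nat.choose_mul_factorial_mul_factorial hjn]
    push_cast
    field_simp
    rw [← pow_mul, mul_comm j, pow_mul, neg_one_sq, one_pow, mul_one]
  rw [hcoeff, map_mul, mul_assoc, expandAt_C, map_intCast]
  exact mul_mem (intCast_mem _ _) (expandAt_cofactor_mul_inv_mem hjn hk)

theorem prod_range_mul_eq_prod_prod {M : Type*} [CommMonoid M] (f : ℕ → M) (m n : ℕ) :
    ∏ j ∈ range (m * n), f j = ∏ b ∈ range m, ∏ r ∈ range n, f (b * n + r) := by
  induction m with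
  | zero => simp
  | succ m ih => rw [Nat.succ_mul, prod_range_add, ih, prod_range_succ]

namespace R

def numerator (s D n : ℕ) : ℚ[X] :=
  C ((D : ℚ) ^ (3 * D * n) * (n ! : ℚ) ^ (s + 1 - 3 * D)) *
    ∏ j ∈ range (3 * D * n + 1), (X + C ((j : ℚ) / D - n))

def block (D n : ℕ) (c : ℤ) : ℚ[X] :=
  ∏ r ∈ range n, (C (D : ℚ) * X + C ((c : ℚ) + r))

theorem degree_block_le (D n : ℕ) (c : ℤ) : (block D n c).degree ≤ n := by
  rw [block]
  refine (degree_prod_le _ _).trans ((sum_le_sum fun r _ => degree_linear_le).trans ?_)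
  simp

theorem block_eval_neg_natCast (D n : ℕ) (c : ℤ) (j : ℕ) :
    ∃ z : ℤ, (block D n c).eval (-(j : ℚ)) = n ! * z := by
  obtain ⟨z, hz⟩ := Nat.factorial_coe_dvd_prod n (c - D * j)
  refine ⟨z, ?_⟩
  rw [block, eval_prod]
  convert congrArg (Int.cast : ℤ → ℚ) hz using 1 <;> push_cast
  · exact prod_congr rfl fun r _ => by simp only [eval_add, eval_mul, eval_C, eval_X]; ring
  · rfl

theorem numerator_eq_mul_prod_block (s : ℕ) {D : ℕ} (hD : 0 < D) (n : ℕ) :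
    numerator s D n = C ((n ! : ℚ) ^ (s + 1 - 3 * D)) * (X + C (2 * n : ℚ)) *
      ∏ b ∈ range (3 * D), block D n (b * n - D * n) := by
  have hD' : (D : ℚ) ≠ 0 := by positivity
  have hblocks : C ((D : ℚ) ^ (3 * D * n)) * ∏ j ∈ range (3 * D * n), (X + C ((j : ℚ) / D - n)) =
      ∏ b ∈ range (3 * D), block D n (b * n - D * n) := by
    rw [map_pow, pow_eq_prod_const, ← prod_mul_distrib, prod_range_mul_eq_prod_prod]
    refine prod_congr rfl fun b _ => prod_congr rfl fun r _ => ?_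
    rw [mul_add, ← C_mul]
    congr 2
    push_cast
    field_simp
    ring
  have hlast : ((3 * D * n : ℕ) : ℚ) / D - n = 2 * n := by
    push_cast
    field_simp
    ring
  rw [numerator, prod_range_succ, ← hblocks, map_mul, hlast]
  ring

theorem numerator_eq_sum_of_eq {s D n : ℕ} {a : ℕ → ℕ → ℚ}
    (ha : ∀ t : ℝ, (∀ k : ℕ, k ≤ n → t ≠ -(k : ℝ)) →
      R s D n t = ∑ i ∈ Icc 1 s, ∑ k ∈ range (n + 1), (a i k : ℝ) / (t + k) ^ i) :
    numerator s D n = ∑ i ∈ Icc 1 s, ∑ k ∈ range (n + 1),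
      C (a i k) * (X + C (k : ℚ)) ^ (s + 1 - i) * cofactor n k ^ (s + 1) := by
  refine eq_of_infinite_eval_eq _ _ ((Set.Ioi_infinite 0).mono fun q (hq : 0 < q) => ?_)
  apply Rat.cast_injective (α := ℝ)
  have hpos : ∀ j : ℕ, (q : ℝ) + j ≠ 0 := fun j => by positivity
  have hR := ha q fun k _ h => hpos k (by rw [h]; ring)
  rw [R, div_eq_iff (pow_ne_zero _ (prod_ne_zero_iff.mpr fun j _ => hpos j))] at hR
  convert hR using 1
  · simp only [numerator, eval_mul, eval_C, eval_prod, eval_add, eval_X]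
    push_cast
    exact congrArg _ (prod_congr rfl fun j _ => by ring)
  · simp only [eval_finsetSum, eval_mul, eval_C, eval_pow, eval_add, eval_X, cofactor, eval_prod,
      sum_mul]
    push_cast
    refine sum_congr rfl fun i hi => sum_congr rfl fun k hk => ?_
    rw [← mul_prod_erase _ _ hk, mul_pow,
      ← pow_sub_mul_pow ((q : ℝ) + k) (by have := (mem_Icc.mp hi).2; omega : i ≤ s + 1)]
    field_simp [hpos k]

/-- The expansion of `(t + k)^(s+1) R_n(t)` around `t = -k`. -/
def localSeries (s D n k : ℕ) : ℚ⟦X⟧ :=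
  expandAt k (numerator s D n) * (expandAt k (cofactor n k))⁻¹ ^ (s + 1)

theorem localSeries_mem {s D n k : ℕ} (hD : 0 < D) (hsD : 3 * D ≤ s) (hk : k ≤ n) :
    localSeries s D n k ∈ rescaleIntegral (dd n) := by
  set w := (expandAt k (cofactor n k))⁻¹ with hw
  have hfactor : localSeries s D n k =
      (expandAt k (C (n ! : ℚ)) * w) ^ (s + 1 - 3 * D) * expandAt k (X + C (2 * n : ℚ)) *
        ∏ b ∈ range (3 * D), (expandAt k (block D n (b * n - D * n)) * w) := by
    rw [localSeries, ← hw, ← pow_sub_mul_pow _ (show 3 * D ≤ s + 1 by omega),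
      numerator_eq_mul_prod_block s hD n, prod_mul_distrib, prod_const, card_range,
      map_mul, map_mul, map_prod, C_pow, map_pow]
    ring
  have hlinear : expandAt k (X + C (2 * n : ℚ)) ∈ rescaleIntegral (dd n) := by
    rw [expandAt_X_add_C, show (2 * n : ℚ) - k = ((2 * n - k : ℤ) : ℚ) by push_cast; rfl]
    exact X_add_intCast_mem_rescaleIntegral _ _
  have hconst : expandAt k (C (n ! : ℚ)) * w ∈ rescaleIntegral (dd n) :=
    expandAt_mul_inv_mem hk (degree_C_le.trans (by exact_mod_cast Nat.zero_le n))
      fun j _ => ⟨1, by simp⟩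
  rw [hfactor]
  exact mul_mem (mul_mem (pow_mem hconst _) hlinear) (prod_mem fun b _ =>
    expandAt_mul_inv_mem hk (degree_block_le D n _) fun j _ => block_eval_neg_natCast D n _ j)

theorem coeff_localSeries {s D n k i : ℕ} {a : ℕ → ℕ → ℚ}
    (hN : numerator s D n = ∑ i ∈ Icc 1 s, ∑ k ∈ range (n + 1),
      C (a i k) * (X + C (k : ℚ)) ^ (s + 1 - i) * cofactor n k ^ (s + 1))
    (hk : k ≤ n) (hi : i ∈ Icc 1 s) :
    PowerSeries.coeff (s + 1 - i) (localSeries s D n k) = a i k := by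
  set w := expandAt k (cofactor n k)
  set T := ∑ i ∈ Icc 1 s, PowerSeries.C (a i k) * PowerSeries.X ^ (s + 1 - i)
  -- modulo `X ^ (s + 1)` only the terms of the pole `-k` survive
  have hnum : PowerSeries.X ^ (s + 1) ∣ expandAt k (numerator s D n) - T * w ^ (s + 1) := by
    rw [hN, sum_comm, ← add_sum_erase _ _ (mem_range.mpr (by omega : k < n + 1)), map_add,
      add_sub_right_comm]
    have hdiag : expandAt k (∑ i ∈ Icc 1 s,
        C (a i k) * (X + C (k : ℚ)) ^ (s + 1 - i) * cofactor n k ^ (s + 1)) = T * w ^ (s + 1) := by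
      simp only [map_sum, map_mul, map_pow, expandAt_C, expandAt_X_add_C_self, sum_mul, T, w]
    rw [hdiag, sub_self, zero_add, map_sum]
    refine dvd_sum fun k' hk' => ?_
    rw [map_sum]
    refine dvd_sum fun i _ => ?_
    rw [map_mul, map_pow _ (cofactor n k')]
    exact Dvd.dvd.mul_left
      (pow_dvd_pow_of_dvd (X_dvd_expandAt_cofactor hk (ne_of_mem_erase hk').symm) _) _
  have hloc : PowerSeries.X ^ (s + 1) ∣ localSeries s D n k - T := by
    have hw : w * w⁻¹ = 1 :=
      PowerSeries.mul_inv_cancel _ (constantCoeff_expandAt_cofactor_ne_zero n k)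
    convert hnum.mul_right (w⁻¹ ^ (s + 1)) using 1
    rw [localSeries, sub_mul, mul_assoc, ← mul_pow, hw, one_pow, mul_one]
  obtain ⟨hi1, his⟩ := mem_Icc.mp hi
  have hcoeff := PowerSeries.X_pow_dvd_iff.mp hloc (s + 1 - i) (by omega)
  rw [map_sub, sub_eq_zero] at hcoeff
  rw [hcoeff, map_sum, sum_eq_single_of_mem i hi]
  · simp
  · intro i' hi' hne
    rw [PowerSeries.coeff_C_mul, PowerSeries.coeff_X_pow,
      if_neg (by have := mem_Icc.mp hi'; omega), mul_zero]

end R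

end

theorem stmt4_general (s D n : ℕ) (hD : 0 < D) (hsD : 3 * D ≤ s)
    (a : ℕ → ℕ → ℚ)
    (ha : ∀ t : ℝ, (∀ k : ℕ, k ≤ n → t ≠ -(k : ℝ)) →
      R s D n t = ∑ i ∈ Finset.Icc 1 s, ∑ k ∈ Finset.range (n + 1), (a i k : ℝ) / (t + k) ^ i)
    (i : ℕ) (hi3 : 3 ≤ i) (his : i ≤ s) :
    ∃ z : ℤ, (dd n : ℚ) ^ (s + 1 - i) * ∑ k ∈ Finset.range (n + 1), a i k = (z : ℚ) := by
  have hN := R.numerator_eq_sum_of_eq ha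
  have hmem : ∑ k ∈ range (n + 1), R.localSeries s D n k ∈ rescaleIntegral (dd n) :=
    sum_mem fun k hk => R.localSeries_mem hD hsD (Nat.lt_succ_iff.mp (mem_range.mp hk))
  obtain ⟨z, hz⟩ := mem_rescaleIntegral_iff.mp hmem (s + 1 - i)
  refine ⟨z, ?_⟩
  rw [← hz, map_sum]
  push_cast
  refine congrArg _ (sum_congr rfl fun k hk => ?_)
  exact (R.coeff_localSeries hN (Nat.lt_succ_iff.mp (mem_range.mp hk))
    (mem_Icc.mpr ⟨by omega, his⟩)).symm

theorem stmt4 (s D n : ℕ) (hs : Odd s) (hD : 0 < D) (hn : 0 < n) (hsD : 3 * D ≤ s)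
    (hDn : Even (D * n)) (a : ℕ → ℕ → ℚ)
    (ha : ∀ t : ℝ, (∀ k : ℕ, k ≤ n → t ≠ -(k : ℝ)) →
      R s D n t = ∑ i ∈ Finset.Icc 1 s, ∑ k ∈ Finset.range (n + 1), (a i k : ℝ) / (t + k) ^ i)
    (i : ℕ) (hi3 : 3 ≤ i) (his : i ≤ s) :
    ∃ z : ℤ, (dd n : ℚ) ^ (s + 1 - i) * ∑ k ∈ Finset.range (n + 1), a i k = (z : ℚ) :=
  stmt4_general s D n hD hsD a ha i hi3 his
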